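/- arXiv:0811.2517 — 5 statements merged into one kernel-verified Lean document; each statement's English description precedes it below -/
import Mathlib

section
/- Let G be a finite p-group and i ≥ 0. Define K_i as the intersection of H' over all subgroups H of G of index p^i, where H' denotes the commutator subgroup of H. Then K_i is contained in the kernel of every irreducible complex representation of G of dimension at most p^i. -/
/-!
An irreducible representation `ρ` of a finite nilpotent group over an algebraically closed field
has a nonzero vector `v` whose line is stable under a subgroup `H` of index at most `dim ρ`.
By induction on `|G|`: if not every element acts by a scalar, pick `x` that is central modulo
the scalar subgroup. Conjugation then rescales `ρ x` by a character `φ`, so `T = ker φ` is a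
proper subgroup preserving each eigenspace `E` of `ρ x`, while the cosets of `T` carry `E` to
`[G : T]` distinct eigenspaces; hence `[G : T] · dim E ≤ dim ρ`, and we recurse into an
irreducible `T`-subrepresentation of `E`.

For a `p`-group, shrink `H` to `L` of index exactly `p ^ i`. Then `[L, L]` fixes `v`. Since `K_i`
is normal and contained in `[L, L]`, every `g ∈ K_i` fixes each `ρ y v`, and these span `V`.
-/

open Module
open scoped commutatorElement

lemma Group.IsNilpotent.exists_notMem_forall_commutatorElement_mem {G : Type*} [Group G]
    [Group.IsNilpotent G] {N : Subgroup G} [N.Normal] (hN : N ≠ ⊤) :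
    ∃ x ∉ N, ∀ g : G, ⁅g, x⁆ ∈ N := by
  have : Nontrivial (G ⧸ N) := QuotientGroup.nontrivial_iff.mpr hN
  obtain ⟨z, hz, hz1⟩ :=
    (Subgroup.center (G ⧸ N)).bot_or_exists_ne_one.resolve_left
      (Group.IsNilpotent.center_ne_bot _)
  obtain ⟨x, rfl⟩ := QuotientGroup.mk_surjective z
  refine ⟨x, fun hx => hz1 ((QuotientGroup.eq_one_iff x).mpr hx), fun g => ?_⟩
  rw [← QuotientGroup.eq_one_iff, ← QuotientGroup.mk'_apply, map_commutatorElement,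
    commutatorElement_eq_one_iff_mul_comm]
  exact Subgroup.mem_center_iff.mp hz _

lemma Subgroup.normal_iInf_commutator_of_index_eq {G : Type*} [Group G] (n : ℕ) :
    (⨅ H ∈ {H : Subgroup G | H.index = n}, ⁅H, H⁆).Normal := by
  constructor
  intro a ha g
  simp only [Subgroup.mem_iInf, Set.mem_ofPred_eq] at ha ⊢
  intro H hH
  have := ha (H.map (MulAut.conj g⁻¹ : G →* G)) (by rw [Subgroup.index_map_equiv, hH])
  rw [← Subgroup.map_commutator] at this
  obtain ⟨y, hy, rfl⟩ := this
  simpa [mul_assoc] using hy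

lemma IsPGroup.exists_le_index_eq_pow {p : ℕ} [Fact p.Prime] {G : Type*} [Group G] [Finite G]
    (hG : IsPGroup p G) {H : Subgroup G} {i : ℕ} (hH : H.index ≤ p ^ i)
    (hi : p ^ i ≤ Nat.card G) : ∃ L ≤ H, L.index = p ^ i := by
  have hp : 1 < p := (Fact.out : p.Prime).one_lt
  obtain ⟨a, ha⟩ := hG.exists_card_eq
  obtain ⟨j, hj⟩ := hG.index H
  have hia : i ≤ a := (Nat.pow_le_pow_iff_right hp).mp (ha ▸ hi)
  have hji : j ≤ i := (Nat.pow_le_pow_iff_right hp).mp (hj ▸ hH)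
  have hHcard : Nat.card H = p ^ (a - j) := by
    refine Nat.eq_of_mul_eq_mul_right (pow_pos (zero_lt_one.trans hp) j) ?_
    rw [← pow_add, Nat.sub_add_cancel (hji.trans hia), ← ha, ← hj, H.card_mul_index]
  obtain ⟨K, hK⟩ := Sylow.exists_subgroup_card_pow_prime p
    (hHcard ▸ pow_dvd_pow p (by omega : a - i ≤ a - j))
  refine ⟨K.map H.subtype, Subgroup.map_subtype_le K, ?_⟩
  refine Nat.eq_of_mul_eq_mul_right (pow_pos (zero_lt_one.trans hp) (a - i)) ?_
  rw [← pow_add, Nat.add_sub_cancel' hia, ← ha, ← hK,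
    ← Subgroup.card_map_of_injective H.subtype_injective, Subgroup.index_mul_card]

lemma iSupIndep.sum_finrank_le_finrank {K V ι : Type*} [DivisionRing K] [AddCommGroup V]
    [Module K V] [FiniteDimensional K V] [Fintype ι] {p : ι → Submodule K V}
    (hp : iSupIndep p) : ∑ i, finrank K (p i) ≤ finrank K V := by
  classical
  rw [← finrank_directSum]
  exact LinearMap.finrank_le_finrank_of_injective hp.dfinsupp_lsum_injective

namespace Subrepresentation

variable {k G V : Type*} [Field k] [Group G] [AddCommGroup V] [Module k V]
  {ρ : Representation k G V}

instance [FiniteDimensional k V] : WellFoundedLT (Subrepresentation ρ) :=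
  (Monotone.strictMono_of_injective (f := toSubmodule) (fun _ _ h => h)
    toSubmodule_injective).wellFoundedLT

lemma isIrreducible_toRepresentation {σ : Subrepresentation ρ} (hσ : IsAtom σ) :
    σ.toRepresentation.IsIrreducible := by
  let W := σ.toSubmodule
  have hinj : Function.Injective (Submodule.map W.subtype) :=
    Submodule.map_injective_of_injective W.injective_subtype
  have : Nontrivial W := Submodule.nontrivial_iff_ne_bot.mpr fun h =>
    hσ.1 (toSubmodule_injective h)
  have : Nontrivial (Subrepresentation σ.toRepresentation) :=
    ⟨⊥, ⊤, fun h => bot_ne_top (α := Submodule k W) (congrArg toSubmodule h)⟩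
  refine ⟨fun U => ?_⟩
  let U' : Subrepresentation ρ := ⟨U.toSubmodule.map W.subtype, by
    rintro g _ ⟨u, hu, rfl⟩
    exact ⟨σ.toRepresentation g u, U.apply_mem_toSubmodule g hu, rfl⟩⟩
  have hU' : U' ≤ σ := by
    rintro _ ⟨u, -, rfl⟩
    exact u.2
  rcases hσ.le_iff.mp hU' with h | h
  · left
    refine toSubmodule_injective (hinj ?_)
    exact (congrArg toSubmodule h).trans (Submodule.map_bot _).symm
  · right
    refine toSubmodule_injective (hinj ?_)
    exact (congrArg toSubmodule h).trans (Submodule.map_subtype_top _).symm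

end Subrepresentation

namespace Representation

variable {k G V : Type*} [Field k] [Group G] [AddCommGroup V] [Module k V]
  (ρ : Representation k G V)

def lineStabilizer (v : V) : Subgroup G where
  carrier := {g | ∃ c : k, ρ g v = c • v}
  one_mem' := ⟨1, by simp⟩
  mul_mem' := by
    rintro a b ⟨c, hc⟩ ⟨d, hd⟩
    exact ⟨c * d, by rw [map_mul, Module.End.mul_apply, hd, map_smul, hc, smul_smul, mul_comm]⟩
  inv_mem' := by
    rintro a ⟨c, hc⟩
    refine ⟨c⁻¹, ?_⟩
    rcases eq_or_ne c 0 with rfl | hc0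
    · have hv : v = 0 := by simpa using congrArg (ρ a⁻¹) hc
      simp [hv]
    · rw [inv_apply_eq_iff, map_smul, hc, smul_smul, inv_mul_cancel₀ hc0, one_smul]

lemma apply_mul_comm_of_mem_lineStabilizer {v : V} {a b : G} (ha : a ∈ ρ.lineStabilizer v)
    (hb : b ∈ ρ.lineStabilizer v) : ρ (a * b) v = ρ (b * a) v := by
  obtain ⟨c, hc⟩ := ha
  obtain ⟨d, hd⟩ := hb
  simp only [map_mul, Module.End.mul_apply, hc, hd, map_smul, smul_smul, mul_comm]

lemma apply_eq_of_mem_commutator_lineStabilizer (v : V) {g : G}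
    (hg : g ∈ ⁅ρ.lineStabilizer v, ρ.lineStabilizer v⁆) : ρ g v = v := by
  let fixer : Subgroup G := (MulAction.stabilizer (Module.End k V)ˣ v).comap ρ.asGroupHom
  suffices h : ⁅ρ.lineStabilizer v, ρ.lineStabilizer v⁆ ≤ fixer by
    simpa [fixer, Units.smul_def, asGroupHom_apply] using h hg
  rw [Subgroup.commutator_le]
  intro a ha b hb
  simp only [fixer, Subgroup.mem_comap, MulAction.mem_stabilizer_iff, Units.smul_def,
    asGroupHom_apply]
  have h := ρ.apply_mul_comm_of_mem_lineStabilizer (inv_mem ha) (inv_mem hb)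
  calc ρ ⁅a, b⁆ v = ρ (a * b) (ρ (a⁻¹ * b⁻¹) v) := by
        rw [← Module.End.mul_apply, ← map_mul, commutatorElement_def, mul_assoc (a * b)]
    _ = v := by rw [h, ← Module.End.mul_apply, ← map_mul, mul_assoc, mul_inv_cancel_left,
        mul_inv_cancel, map_one, Module.End.one_apply]

lemma span_orbit_eq_top [IsIrreducible ρ] {v : V} (hv : v ≠ 0) :
    Submodule.span k (Set.range fun g => ρ g v) = ⊤ := by
  let σ : Subrepresentation ρ := ⟨Submodule.span k (Set.range fun g => ρ g v), fun g w hw => by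
    refine Submodule.span_induction (fun _ ⟨x, hx⟩ => ?_) (by simp) (fun _ _ _ _ => ?_)
      (fun _ _ _ => ?_) hw
    · exact Submodule.subset_span ⟨g * x, by simp [← hx]⟩
    · simpa using Submodule.add_mem _
    · simpa using Submodule.smul_mem _ _⟩
  have hvσ : v ∈ σ.toSubmodule := Submodule.subset_span ⟨1, by simp⟩
  rcases eq_bot_or_eq_top σ with h | h
  · rw [h] at hvσ
    exact absurd ((Submodule.mem_bot k).mp hvσ) hv
  · exact congrArg Subrepresentation.toSubmodule h

lemma nontrivial_of_isIrreducible [IsIrreducible ρ] : Nontrivial V := by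
  by_contra h
  rw [not_nontrivial_iff_subsingleton] at h
  exact bot_ne_top (α := Subrepresentation ρ)
    (Subrepresentation.toSubmodule_injective (Subsingleton.elim _ _))

def scalarSubgroup : Subgroup G where
  carrier := {g | ∃ c : k, ρ g = algebraMap k (Module.End k V) c}
  one_mem' := ⟨1, by simp⟩
  mul_mem' := by
    rintro a b ⟨c, hc⟩ ⟨d, hd⟩
    exact ⟨c * d, by rw [map_mul, hc, hd, map_mul]⟩
  inv_mem' := by
    rintro a ⟨c, hc⟩
    refine ⟨c⁻¹, LinearMap.ext fun v => ?_⟩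
    rcases eq_or_ne c 0 with rfl | hc0
    · have hv : v = 0 := by simpa [hc] using (ρ.self_inv_apply a v).symm
      simp [hv]
    · rw [inv_apply_eq_iff, hc]
      simp [smul_smul, hc0]

instance : ρ.scalarSubgroup.Normal :=
  ⟨fun _ ⟨c, hc⟩ g => ⟨c, by
    rw [map_mul, map_mul, hc, ← Algebra.commutes, mul_assoc, ← map_mul, mul_inv_cancel, map_one,
      mul_one]⟩⟩

variable {ρ} in
lemma mem_scalarSubgroup {g : G} :
    g ∈ ρ.scalarSubgroup ↔ ∃ c : k, ρ g = algebraMap k (Module.End k V) c :=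
  Iff.rfl

lemma mem_scalarSubgroup_of_forall_commute [IsIrreducible ρ] [FiniteDimensional k V]
    [IsAlgClosed k] {x : G} (hx : ∀ g, ρ g * ρ x = ρ x * ρ g) : x ∈ ρ.scalarSubgroup := by
  let f : IntertwiningMap ρ ρ := ⟨ρ x, fun g => (hx g).symm⟩
  obtain ⟨c, hc⟩ :=
    (IsIrreducible.algebraMap_intertwiningMap_bijective_of_isAlgClosed (ρ := ρ)).2 f
  exact ⟨c, LinearMap.ext fun v => by simpa [f] using congrArg (· v) hc.symm⟩

lemma exists_monoidHom_apply_conj_eq_smul [Nontrivial V] {x : G}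
    (hx : ∀ g : G, ⁅g, x⁆ ∈ ρ.scalarSubgroup) :
    ∃ φ : G →* kˣ, ∀ g, ρ (g * x * g⁻¹) = (φ g : k) • ρ x := by
  choose c hc using hx
  have hconj : ∀ g, ρ (g * x * g⁻¹) = c g • ρ x := fun g => by
    rw [show g * x * g⁻¹ = ⁅g, x⁆ * x by group, map_mul, hc, Algebra.algebraMap_eq_smul_one,
      smul_mul_assoc, one_mul]
  have hx0 : ρ x ≠ 0 := fun h => by
    obtain ⟨v, hv⟩ := exists_ne (0 : V)
    exact hv (by simpa [h] using (ρ.inv_self_apply x v).symm)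
  have hcancel : ∀ a b : k, a • ρ x = b • ρ x → a = b := fun _ _ h =>
    smul_left_injective k hx0 h
  let ψ : G →* k :=
    { toFun := c
      map_one' := hcancel _ _ (by rw [← hconj]; simp)
      map_mul' := fun g h => hcancel _ _ (by
        rw [← hconj, show g * h * x * (g * h)⁻¹ = g * (h * x * h⁻¹) * g⁻¹ by group, map_mul,
          map_mul, hconj, mul_smul_comm, smul_mul_assoc, ← map_mul, ← map_mul, hconj, smul_smul,
          mul_comm]) }
  exact ⟨ψ.toHomUnits, hconj⟩

lemma apply_mem_eigenspace_of_apply_conj_eq_smul {x g : G} {a : kˣ}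
    (h : ρ (g * x * g⁻¹) = (a : k) • ρ x) {c : k} {w : V}
    (hw : w ∈ Module.End.eigenspace (ρ x) c) :
    ρ g w ∈ Module.End.eigenspace (ρ x) (((a⁻¹ : kˣ) : k) * c) := by
  have hx : ρ x = ((a⁻¹ : kˣ) : k) • ρ (g * x * g⁻¹) := by
    rw [h, smul_smul, ← Units.val_mul, inv_mul_cancel, Units.val_one, one_smul]
  rw [Module.End.mem_eigenspace_iff] at hw ⊢
  rw [hx, LinearMap.smul_apply, map_mul, map_mul, Module.End.mul_apply, Module.End.mul_apply,
    inv_self_apply, hw, map_smul, smul_smul]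

lemma index_ker_mul_finrank_eigenspace_le [Finite G] [FiniteDimensional k V] {x : G}
    {φ : G →* kˣ} (hφ : ∀ g, ρ (g * x * g⁻¹) = (φ g : k) • ρ x) (c : k) :
    φ.ker.index * finrank k (Module.End.eigenspace (ρ x) c) ≤ finrank k V := by
  rcases eq_or_ne c 0 with rfl | hc
  · have hker : LinearMap.ker (ρ x) = ⊥ := LinearMap.ker_eq_bot.mpr (ρ.apply_bijective x).1
    rw [Module.End.eigenspace_zero, hker, finrank_bot, mul_zero]
    exact Nat.zero_le _
  have : Fintype φ.range := Fintype.ofFinite (Set.range φ)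
  let eig : φ.range → Submodule k V := fun u =>
    Module.End.eigenspace (ρ x) (((u⁻¹ : kˣ) : k) * c)
  have hindep : iSupIndep eig :=
    (Module.End.eigenspaces_iSupIndep (ρ x)).comp fun u v huv =>
      Subtype.ext (inv_injective (Units.val_injective (mul_right_cancel₀ hc huv)))
  have hle : ∀ u, finrank k (Module.End.eigenspace (ρ x) c) ≤ finrank k (eig u) := by
    rintro ⟨_, g, rfl⟩
    refine LinearMap.finrank_le_finrank_of_injective
      (f := (ρ g).restrict fun _ hw => ρ.apply_mem_eigenspace_of_apply_conj_eq_smul (hφ g) hw)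
      fun w w' h => Subtype.ext ((ρ.apply_bijective g).1 (congrArg Subtype.val h))
  calc φ.ker.index * finrank k (Module.End.eigenspace (ρ x) c)
      = ∑ _ : φ.range, finrank k (Module.End.eigenspace (ρ x) c) := by
        rw [Finset.sum_const, Finset.card_univ, smul_eq_mul, Subgroup.index_ker,
          Nat.card_eq_fintype_card]
    _ ≤ ∑ u, finrank k (eig u) := Finset.sum_le_sum fun u _ => hle u
    _ ≤ finrank k V := hindep.sum_finrank_le_finrank

lemma exists_subgroup_ne_top_subrepresentation [Finite G] [Group.IsNilpotent G] [IsAlgClosed k]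
    [FiniteDimensional k V] [IsIrreducible ρ] (hZ : ρ.scalarSubgroup ≠ ⊤) :
    ∃ T : Subgroup G, T ≠ ⊤ ∧ ∃ E : Subrepresentation (ρ.comp T.subtype), E ≠ ⊥ ∧
      T.index * finrank k E.toSubmodule ≤ finrank k V := by
  have := nontrivial_of_isIrreducible ρ
  obtain ⟨x, hxZ, hx⟩ := Group.IsNilpotent.exists_notMem_forall_commutatorElement_mem hZ
  obtain ⟨φ, hφ⟩ := ρ.exists_monoidHom_apply_conj_eq_smul hx
  obtain ⟨c, hc⟩ := Module.End.exists_eigenvalue (ρ x)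
  have hφker {g : G} (hg : g ∈ φ.ker) : ρ (g * x * g⁻¹) = ρ x := by
    rw [hφ g, φ.mem_ker.mp hg, Units.val_one, one_smul]
  refine ⟨φ.ker, fun hT => hxZ (ρ.mem_scalarSubgroup_of_forall_commute fun g => ?_),
    ⟨Module.End.eigenspace (ρ x) c, fun t w hw => ?_⟩, ?_,
    ρ.index_ker_mul_finrank_eigenspace_le hφ c⟩
  · calc ρ g * ρ x = ρ (g * x * g⁻¹) * ρ g := by
          rw [← map_mul, ← map_mul, inv_mul_cancel_right]
      _ = ρ x * ρ g := by rw [hφker (hT ▸ Subgroup.mem_top g)]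
  · simpa [φ.mem_ker.mp t.2] using ρ.apply_mem_eigenspace_of_apply_conj_eq_smul (hφ t) hw
  · exact fun h =>
      Module.End.hasEigenvalue_iff.mp hc (congrArg Subrepresentation.toSubmodule h)

theorem exists_lineStabilizer_index_le_finrank [Finite G] [Group.IsNilpotent G] [IsAlgClosed k]
    [FiniteDimensional k V] [IsIrreducible ρ] :
    ∃ v : V, v ≠ 0 ∧ ∃ H : Subgroup G, H ≤ ρ.lineStabilizer v ∧ H.index ≤ finrank k V := by
  induction hn : Nat.card G using Nat.strong_induction_on generalizing G V with
  | _ n IH =>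
  have := nontrivial_of_isIrreducible ρ
  by_cases hZ : ρ.scalarSubgroup = ⊤
  · obtain ⟨v, hv⟩ := exists_ne (0 : V)
    refine ⟨v, hv, ⊤, fun g _ => ?_, (Subgroup.index_top (G := G)).trans_le finrank_pos⟩
    obtain ⟨c, hc⟩ := mem_scalarSubgroup.mp (hZ ▸ Subgroup.mem_top g)
    exact ⟨c, by simp [hc]⟩
  obtain ⟨T, hT, E, hE, hdim⟩ := ρ.exists_subgroup_ne_top_subrepresentation hZ
  obtain ⟨σ, hσ, hσE⟩ := (eq_bot_or_exists_atom_le E).resolve_left hE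
  have := Subrepresentation.isIrreducible_toRepresentation hσ
  have hcard : Nat.card T < n := by
    obtain ⟨x, hx⟩ := SetLike.exists_not_mem_of_ne_top T hT
    exact hn ▸ Finite.card_subtype_lt hx
  obtain ⟨v, hv, H, hH, hHdim⟩ := IH _ hcard σ.toRepresentation rfl
  refine ⟨v, by simpa using hv, H.map T.subtype,
    Subgroup.map_le_iff_le_comap.mpr fun h hh => ?_, ?_⟩
  · obtain ⟨c, hc⟩ := hH hh
    exact ⟨c, congrArg Subtype.val hc⟩
  · rw [Subgroup.index_map_subtype]
    calc H.index * T.index ≤ finrank k σ.toSubmodule * T.index := Nat.mul_le_mul_right _ hHdim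
      _ ≤ finrank k E.toSubmodule * T.index :=
        Nat.mul_le_mul_right _ (Submodule.finrank_mono hσE)
      _ ≤ finrank k V := by rw [mul_comm]; exact hdim

end Representation

/-- Let `G` be a finite p-group and `K_i = ⋂ { [H,H] : H ≤ G, [G:H] = p^i }`.
Then `K_i` is contained in the kernel of every irreducible complex
representation of `G` of dimension at most `p^i`. -/
theorem stmt2 {p : ℕ} (hp : p.Prime) {G : Type*} [Group G] [Finite G]
    (hG : IsPGroup p G) (i : ℕ) (hpi : p ^ i ≤ Nat.card G)
    (V : Type*) [AddCommGroup V] [Module ℂ V] [FiniteDimensional ℂ V]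
    (ρ : Representation ℂ G V)
    (hirr : IsSimpleModule (MonoidAlgebra ℂ G) ρ.asModule)
    (hdim : Module.finrank ℂ V ≤ p ^ i) :
    ∀ g ∈ ⨅ H ∈ {H : Subgroup G | H.index = p ^ i}, ⁅H, H⁆, ρ g = 1 := by
  have : Fact p.Prime := ⟨hp⟩
  have := (Representation.irreducible_iff_isSimpleModule_asModule ρ).mpr hirr
  have := hG.isNilpotent
  intro g hg
  obtain ⟨v, hv, H, hHv, hH⟩ := ρ.exists_lineStabilizer_index_le_finrank
  obtain ⟨L, hLH, hL⟩ := hG.exists_le_index_eq_pow (hH.trans hdim) hpi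
  refine LinearMap.ext_on_range (ρ.span_orbit_eq_top hv) fun x => ?_
  have hconj : x⁻¹ * g * x ∈ ⁅L, L⁆ := by
    have := (Subgroup.normal_iInf_commutator_of_index_eq (p ^ i)).conj_mem g hg x⁻¹
    rw [inv_inv, Subgroup.mem_iInf] at this
    exact Subgroup.mem_iInf.mp (this L) hL
  have hLv : L ≤ ρ.lineStabilizer v := hLH.trans hHv
  have := ρ.apply_eq_of_mem_commutator_lineStabilizer v
    (Subgroup.commutator_mono hLv hLv hconj)
  rwa [map_mul, map_mul, Module.End.mul_apply, Module.End.mul_apply,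
    Representation.inv_apply_eq_iff] at this
end

section
/- Let G be a finite p-group, C = C(G)_p the p-torsion subgroup of the center of G (an F_p-vector space), and let ρ = ρ₁ ⊕ ⋯ ⊕ ρ_m be a direct sum of irreducible complex representations of G with associated central characters χ₁, …, χ_m : C → ℂˣ (so that ρ_i restricted to C acts by the scalar character χ_i). Then ρ is faithful if and only if χ₁, …, χ_m span the dual F_p-vector space C* = Hom(C, F_p). -/
private lemma aux_scalar {V : Type*} [AddCommGroup V] [Module ℂ V] [Nontrivial V]
    (u : ℂˣ) (h : (u : ℂ) • (1 : Module.End ℂ V) = 1) : u = 1 := by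
  obtain ⟨v, hv⟩ := exists_ne (0 : V)
  have hv' := LinearMap.congr_fun h v
  simp only [LinearMap.smul_apply, Module.End.one_apply] at hv'
  have h2 : ((u : ℂ) - 1) • v = 0 := by rw [sub_smul, one_smul, hv', sub_self]
  rcases smul_eq_zero.mp h2 with h3 | h3
  · exact Units.ext (by rw [Units.val_one]; linear_combination h3)
  · exact absurd h3 hv

open MulAction in
private lemma aux_normal_center {p : ℕ} (hp : p.Prime) {G : Type*} [Group G] [Finite G]
    (hG : IsPGroup p G) (K : Subgroup G) [K.Normal] (hK : K ≠ ⊥) :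
    ∃ z : G, z ∈ K ∧ z ≠ 1 ∧ z ∈ Subgroup.center G := by
  haveI : Fact p.Prime := ⟨hp⟩
  have hG' : IsPGroup p (ConjAct G) := fun g => hG (ConjAct.ofConjAct g)
  have hmod := hG'.card_modEq_card_fixedPoints K
  have hKp : IsPGroup p K := hG.to_subgroup K
  obtain ⟨n, hn⟩ := IsPGroup.iff_card.mp hKp
  have hnt : Nontrivial K := K.nontrivial_iff_ne_bot.mpr hK
  have hn0 : n ≠ 0 := by
    rintro rfl
    rw [pow_zero] at hn
    have := Finite.one_lt_card (α := K)
    omega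
  have hdvdK : p ∣ Nat.card K := hn ▸ dvd_pow_self p hn0
  have hdvdF : p ∣ Nat.card (fixedPoints (ConjAct G) K) :=
    (Nat.modEq_zero_iff_dvd.mp ((hmod.symm.trans (Nat.modEq_zero_iff_dvd.mpr hdvdK))))
  have h1mem : (1 : K) ∈ fixedPoints (ConjAct G) K := fun g => smul_one g
  have hpos : 0 < Nat.card (fixedPoints (ConjAct G) K) :=
    Nat.card_pos_iff.mpr ⟨⟨1, h1mem⟩, inferInstance⟩
  have h1lt : 1 < Nat.card (fixedPoints (ConjAct G) K) :=
    lt_of_lt_of_le hp.one_lt (Nat.le_of_dvd hpos hdvdF)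
  have : Nontrivial (fixedPoints (ConjAct G) K) := Finite.one_lt_card_iff_nontrivial.mp h1lt
  obtain ⟨z, hz⟩ := exists_ne (⟨(1 : K), h1mem⟩ : fixedPoints (ConjAct G) K)
  refine ⟨(z.1 : G), z.1.2, ?_, ?_⟩
  · intro h
    exact hz (Subtype.ext (Subtype.ext h))
  · rw [Subgroup.mem_center_iff]
    intro g
    have hzz := z.2 (ConjAct.toConjAct g)
    have hv : (ConjAct.toConjAct g) • (z.1 : G) = (z.1 : G) := by
      conv_rhs => rw [← hzz]
      exact (ConjAct.Subgroup.val_conj_smul _ _).symm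
    rw [ConjAct.toConjAct_smul, mul_inv_eq_iff_eq_mul] at hv
    exact hv

/-- Let `G` be a finite p-group, `C` the p-torsion subgroup of its center,
and `ρ = ρ₁ ⊕ ⋯ ⊕ ρ_m` a direct sum of irreducible complex representations
with associated central characters `χ₁, …, χ_m : C → ℂˣ`.  Then `ρ` is
faithful iff `χ₁, …, χ_m` span the dual `C* = Hom(C, μ_p)`; since `C` has
exponent `p`, the character group `C →* ℂˣ` is an elementary abelian
p-group (an `𝔽_p`-vector space) in which spanning means generating, i.e.
`closure {χ₁,…,χ_m} = ⊤`. -/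
theorem stmt4 {p : ℕ} (hp : p.Prime) {G : Type*} [Group G] [Finite G]
    (hG : IsPGroup p G)
    (C : Subgroup G) (hC : C ≤ Subgroup.center G)
    (hCp : ∀ c ∈ C, c ^ p = 1)
    (hCfull : ∀ c ∈ Subgroup.center G, c ^ p = 1 → c ∈ C)
    (m : ℕ) (V : Fin m → Type*)
    [∀ i, AddCommGroup (V i)] [∀ i, Module ℂ (V i)]
    [∀ i, FiniteDimensional ℂ (V i)]
    (ρ : ∀ i, Representation ℂ G (V i))
    (hirr : ∀ i, IsSimpleModule (MonoidAlgebra ℂ G) (ρ i).asModule)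
    (χ : Fin m → (C →* ℂˣ))
    (hχ : ∀ i (c : C), ρ i (c : G) = (χ i c : ℂ) • (1 : Module.End ℂ (V i))) :
    (∀ g : G, (∀ i, ρ i g = 1) → g = 1) ↔
      Subgroup.closure (Set.range χ) = (⊤ : Subgroup (C →* ℂˣ)) := by
  classical
  letI : CommGroup C :=
    { (inferInstance : Group C) with
      mul_comm := fun a b =>
        Subtype.ext ((Subgroup.mem_center_iff.mp (hC a.2) (b : G)).symm) }
  have hnt : ∀ i, Nontrivial (V i) := fun i => by
    haveI := hirr i
    obtain ⟨x, y, hxy⟩ := IsSimpleModule.nontrivial (MonoidAlgebra ℂ G) ((ρ i).asModule)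
    exact ⟨(ρ i).asModuleEquiv x, (ρ i).asModuleEquiv y,
      fun h' => hxy ((ρ i).asModuleEquiv.injective h')⟩
  have key1 : ∀ i (c : C), ρ i (c : G) = 1 → χ i c = 1 := by
    intro i c h1
    haveI := hnt i
    exact aux_scalar (χ i c) (by rw [← hχ i c]; exact h1)
  have key2 : ∀ i (c : C), χ i c = 1 → ρ i (c : G) = 1 := by
    intro i c h1
    rw [hχ i c, h1, Units.val_one, one_smul]
  haveI : NeZero ((Monoid.exponent C : ℂ)) :=
    ⟨Nat.cast_ne_zero.mpr Monoid.exponent_ne_zero_of_finite⟩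
  obtain ⟨eC⟩ := CommGroup.monoidHom_mulEquiv_of_hasEnoughRootsOfUnity C ℂ
  haveI : Finite (C →* ℂˣ) := Finite.of_equiv C eC.symm.toEquiv
  constructor
  · -- faithful → closure = ⊤
    intro hfaith
    set H := Subgroup.closure (Set.range χ) with hH
    haveI : NeZero ((Monoid.exponent H : ℂ)) :=
      ⟨Nat.cast_ne_zero.mpr Monoid.exponent_ne_zero_of_finite⟩
    obtain ⟨eH⟩ := CommGroup.monoidHom_mulEquiv_of_hasEnoughRootsOfUnity H ℂ
    haveI : Finite (H →* ℂˣ) := Finite.of_equiv H eH.symm.toEquiv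
    let ev : C →* (H →* ℂˣ) :=
      { toFun := fun c =>
          { toFun := fun φ => φ.1 c
            map_one' := rfl
            map_mul' := fun φ ψ => rfl }
        map_one' := by ext φ; simp
        map_mul' := fun a b => by ext φ; simp }
    have hinj : Function.Injective ev := by
      rw [injective_iff_map_eq_one]
      intro c hc
      have hall : ∀ i, χ i c = 1 := fun i =>
        DFunLike.congr_fun hc (⟨χ i, Subgroup.subset_closure ⟨i, rfl⟩⟩ : H)
      have : (c : G) = 1 := hfaith c (fun i => key2 i c (hall i))
      exact Subtype.ext this
    have h1 : Nat.card C ≤ Nat.card (H →* ℂˣ) := Nat.card_le_card_of_injective ev hinj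
    have h2 : Nat.card (H →* ℂˣ) = Nat.card H := Nat.card_congr eH.toEquiv
    have h3 : Nat.card (C →* ℂˣ) = Nat.card C := Nat.card_congr eC.toEquiv
    have h4 : Nat.card H ≤ Nat.card (C →* ℂˣ) :=
      Nat.card_le_card_of_injective _ H.subtype_injective
    exact Subgroup.eq_top_of_card_eq H (le_antisymm h4 (by omega))
  · -- closure = ⊤ → faithful
    intro htop g hg
    by_contra hg1
    let K : Subgroup G :=
      { carrier := { x | ∀ i, ρ i x = 1 }
        one_mem' := fun i => map_one _
        mul_mem' := fun {a b} ha hb i => by rw [map_mul, ha i, hb i, mul_one]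
        inv_mem' := fun {a} ha i => by
          have h := (ρ i).map_mul a⁻¹ a
          rw [inv_mul_cancel, map_one, ha i, mul_one] at h
          exact h.symm }
    haveI hKn : K.Normal := by
      constructor
      intro x hx g i
      show ρ i (g * x * g⁻¹) = 1
      rw [map_mul, map_mul, hx i, mul_one, ← map_mul, mul_inv_cancel, map_one]
    have hK : K ≠ ⊥ := fun h => hg1 ((Subgroup.eq_bot_iff_forall K).mp h g hg)
    obtain ⟨z, hzK, hzne, hzc⟩ := aux_normal_center hp hG K hK
    obtain ⟨k, hk⟩ := hG z
    obtain ⟨j, hjk, hord⟩ := (Nat.dvd_prime_pow hp).mp (orderOf_dvd_of_pow_eq_one hk)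
    have hj0 : j ≠ 0 := by
      rintro rfl
      rw [pow_zero] at hord
      exact hzne (orderOf_eq_one_iff.mp hord)
    set c := z ^ p ^ (j - 1) with hc
    have hcp : c ^ p = 1 := by
      rw [hc, ← pow_mul, ← pow_succ, Nat.sub_add_cancel (Nat.one_le_iff_ne_zero.mpr hj0),
        ← hord, pow_orderOf_eq_one]
    have hcne : c ≠ 1 := by
      intro h
      have hd := orderOf_dvd_of_pow_eq_one h
      rw [hord] at hd
      have hle := (Nat.pow_dvd_pow_iff_le_right hp.one_lt).mp hd
      omega
    have hcC : c ∈ C := hCfull c (Subgroup.pow_mem _ hzc _) hcp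
    have hcK : ∀ i, ρ i c = 1 := fun i => by rw [hc, map_pow, hzK i, one_pow]
    set cC : C := ⟨c, hcC⟩ with hcCdef
    have hχ1 : ∀ i, χ i cC = 1 := fun i => key1 i cC (hcK i)
    let ev2 : (C →* ℂˣ) →* ℂˣ :=
      { toFun := fun φ => φ cC
        map_one' := rfl
        map_mul' := fun φ ψ => rfl }
    have hker : (⊤ : Subgroup (C →* ℂˣ)) ≤ ev2.ker := by
      rw [← htop]
      refine (Subgroup.closure_le _).mpr ?_
      rintro _ ⟨i, rfl⟩
      exact hχ1 i
    have hcC1 : cC ≠ 1 := fun h => hcne (congrArg Subtype.val h)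
    obtain ⟨φ, hφ⟩ := CommGroup.exists_apply_ne_one_of_hasEnoughRootsOfUnity C ℂ hcC1
    exact hφ (hker (Subgroup.mem_top φ))
end

section
/- Let G be a finite p-group and ρ = ρ₁ ⊕ ⋯ ⊕ ρ_m a faithful complex representation of minimal dimension among faithful representations of G, with each ρ_i irreducible and χ_i the character by which ρ_i acts on the p-torsion C of the center. Then χ₁, …, χ_m form a basis of the F_p-vector space C* = Hom(C, μ_p); in particular m = dim_{F_p} C. -/
/-!
The kernel of a partial sum `⊕_{i ∈ S} ρ_i` is normal, so if it is nontrivial it contains a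
central element of order `p`, i.e. a nontrivial element of `C`. Hence `⊕_{i ≠ j} ρ_i` is still
faithful as soon as every `c ∈ C` killed by all `χ_i` with `i ≠ j` is also killed by `χ_j`; a
relation `∏ χ_i ^ a_i = 1` with `a_j ≠ 0` forces exactly this, contradicting minimality. So the
`χ_i` are independent and span a subgroup of order `p ^ m` of `C* ≅ C`, while faithfulness
embeds `C` into `μ_p ^ m`; comparing orders gives both `|C| = p ^ m` and `⟨χ_i⟩ = C*`.
-/

open Subgroup

namespace IsPGroup

variable {p : ℕ} [Fact p.Prime] {G : Type*} [Group G] [Finite G]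

theorem inf_center_ne_bot (hG : IsPGroup p G) {N : Subgroup G} [N.Normal] (hN : N ≠ ⊥) :
    N ⊓ center G ≠ ⊥ := by
  have hfix : ∀ x : N, x ∈ MulAction.fixedPoints (ConjAct G) N ↔ (x : G) ∈ center G := by
    intro x
    rw [← SetLike.mem_coe, ← ConjAct.fixedPoints_eq_center]
    exact forall_congr' fun g => Subtype.ext_iff
  have hdvd : p ∣ Nat.card N :=
    (hG.to_subgroup N).card_eq_or_dvd.resolve_left
      fun h => hN (Subgroup.card_eq_one.mp h)
  obtain ⟨x, hx, hx1⟩ :=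
    (hG.of_equiv ConjAct.toConjAct).exists_fixed_point_of_prime_dvd_card_of_fixed_point N hdvd
      ((hfix 1).mpr (center G).one_mem)
  exact Subgroup.ne_bot_iff_exists_ne_one.mpr
    ⟨⟨x, x.2, (hfix x).mp hx⟩, fun h => hx1 (Subtype.ext (congrArg Subtype.val h).symm)⟩

theorem exists_mem_inf_center_orderOf_eq (hG : IsPGroup p G) {N : Subgroup G} [N.Normal]
    (hN : N ≠ ⊥) : ∃ g ∈ N ⊓ center G, orderOf g = p := by
  have hdvd : p ∣ Nat.card (N ⊓ center G : Subgroup G) :=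
    (hG.to_subgroup _).card_eq_or_dvd.resolve_left
      fun h => hG.inf_center_ne_bot hN (Subgroup.card_eq_one.mp h)
  obtain ⟨x, hx⟩ := exists_prime_orderOf_dvd_card' p hdvd
  exact ⟨x, x.2, (Subgroup.orderOf_coe x).trans hx⟩

end IsPGroup

theorem pow_val_add_of_pow_eq_one {M : Type*} [Monoid M] {n : ℕ} [NeZero n] {x : M}
    (hx : x ^ n = 1) (a b : ZMod n) : x ^ (a + b).val = x ^ a.val * x ^ b.val := by
  rw [ZMod.val_add, ← pow_eq_pow_mod _ hx, pow_add]

theorem pow_val_eq_one_iff {M : Type*} [Monoid M] {p : ℕ} [Fact p.Prime] {x : M}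
    (hx : x ^ p = 1) {a : ZMod p} (ha : a ≠ 0) : x ^ a.val = 1 ↔ x = 1 := by
  have hcop : p.gcd a.val = 1 :=
    Nat.Coprime.gcd_eq_one <| (Nat.Prime.coprime_iff_not_dvd Fact.out).mpr fun h =>
      ha <| (ZMod.val_eq_zero a).mp <| Nat.eq_zero_of_dvd_of_lt h (ZMod.val_lt a)
  refine ⟨fun h => ?_, fun h => by rw [h, one_pow]⟩
  simpa [hcop] using pow_gcd_eq_one.mpr ⟨hx, h⟩

section ElementaryAbelian

variable {M : Type*} [CommGroup M] {p : ℕ} [NeZero p] {ι : Type*} [Fintype ι]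

def zmodPowProd (x : ι → M) (hx : ∀ i, x i ^ p = 1) : Multiplicative (ι → ZMod p) →* M where
  toFun a := ∏ i, x i ^ (a.toAdd i).val
  map_one' := by simp
  map_mul' a b := by
    simp only [toAdd_mul, Pi.add_apply, pow_val_add_of_pow_eq_one (hx _), Finset.prod_mul_distrib]

theorem pow_card_le_card_closure [Finite M] (x : ι → M) (hx : ∀ i, x i ^ p = 1)
    (hind : ∀ a : ι → ZMod p, ∏ i, x i ^ (a i).val = 1 → a = 0) :
    p ^ Fintype.card ι ≤ Nat.card (closure (Set.range x)) := by
  have hinj : Function.Injective (zmodPowProd x hx) :=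
    (injective_iff_map_eq_one _).mpr fun a ha => toAdd_eq_zero.mp (hind a.toAdd ha)
  have hmem : ∀ a, zmodPowProd x hx a ∈ closure (Set.range x) := fun a =>
    Subgroup.prod_mem _ fun i _ => pow_mem (subset_closure (Set.mem_range_self i)) _
  calc p ^ Fintype.card ι
    _ = Nat.card (ι → ZMod p) := by simp [Nat.card_pi]
    _ ≤ _ := Nat.card_le_card_of_injective (fun a => ⟨_, hmem (.ofAdd a)⟩)
        fun a b h => hinj (congrArg Subtype.val h)

end ElementaryAbelian

section Duality

variable {A : Type*} [Group A] {p : ℕ} [NeZero p] {ι : Type*} [Fintype ι]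

theorem card_le_pow_of_separating (χ : ι → (A →* ℂˣ)) (hχ : ∀ i, χ i ^ p = 1)
    (hsep : ∀ a, (∀ i, χ i a = 1) → a = 1) : Nat.card A ≤ p ^ Fintype.card ι := by
  let f : A →* (ι → rootsOfUnity p ℂ) := MonoidHom.pi fun i =>
    (χ i).codRestrict _ fun a =>
      (mem_rootsOfUnity p _).mpr (by rw [← MonoidHom.pow_apply, hχ i]; rfl)
  have hf : Function.Injective f := (injective_iff_map_eq_one f).mpr fun a ha =>
    hsep a fun i => congrArg Subtype.val (congrFun ha i)
  calc Nat.card A ≤ Nat.card (ι → rootsOfUnity p ℂ) := Nat.card_le_card_of_injective f hf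
    _ = p ^ Fintype.card ι := by
      rw [Nat.card_pi, HasEnoughRootsOfUnity.natCard_rootsOfUnity ℂ p, Finset.prod_const,
        Finset.card_univ]

open scoped IsMulCommutative in
theorem closure_eq_top_and_card_eq_of_separating_of_independent [IsMulCommutative A] [Finite A]
    (χ : ι → (A →* ℂˣ))
    (hχ : ∀ i, χ i ^ p = 1) (hsep : ∀ a, (∀ i, χ i a = 1) → a = 1)
    (hind : ∀ a : ι → ZMod p, ∏ i, χ i ^ (a i).val = 1 → a = 0) :
    closure (Set.range χ) = ⊤ ∧ Nat.card A = p ^ Fintype.card ι := by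
  have : NeZero (Monoid.exponent A : ℂ) :=
    ⟨Nat.cast_ne_zero.mpr Monoid.exponent_ne_zero_of_finite⟩
  have hdual := CommGroup.card_monoidHom_of_hasEnoughRootsOfUnity A ℂ
  have : Finite (A →* ℂˣ) := Nat.finite_of_card_ne_zero (hdual ▸ Nat.card_pos.ne')
  -- `p ^ |ι| ≤ |⟨χ⟩| ≤ |A →* ℂˣ| = |A| ≤ p ^ |ι|`
  have hle := card_le_pow_of_separating χ hχ hsep
  have hge := pow_card_le_card_closure χ hχ hind
  have hclos := Subgroup.card_le_card_group (closure (Set.range χ))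
  exact ⟨Subgroup.eq_top_of_card_eq _ (by omega), by omega⟩

end Duality

theorem Representation.directSum_apply_eq_one_iff {k G ι : Type*} [Semiring k] [Monoid G]
    {V : ι → Type*} [∀ i, AddCommMonoid (V i)] [∀ i, Module k (V i)]
    (ρ : ∀ i, Representation k G (V i)) (g : G) :
    directSum ρ g = 1 ↔ ∀ i, ρ i g = 1 := by
  classical
  refine ⟨fun h i => LinearMap.ext fun v => ?_, fun h => ?_⟩
  · simpa using congrArg (fun f => f (DirectSum.lof k ι V i v) i) h
  · ext i v j
    simp [h]

universe u

section MinimalFaithful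

variable {p : ℕ} [Fact p.Prime] {G : Type*} [Group G] {C : Subgroup G}
  {ι : Type u} {V : ι → Type u} [∀ i, AddCommGroup (V i)] [∀ i, Module ℂ (V i)]
  [∀ i, Nontrivial (V i)] {ρ : ∀ i, Representation ℂ G (V i)} {χ : ι → (C →* ℂˣ)}

theorem apply_eq_one_iff_of_eq_smul_one (hχ : ∀ i (c : C), ρ i c = (χ i c : ℂ) • 1)
    (i : ι) (c : C) : ρ i c = 1 ↔ χ i c = 1 := by
  rw [hχ, ← Algebra.algebraMap_eq_smul_one, FaithfulSMul.algebraMap_eq_one_iff, Units.val_eq_one]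

theorem eq_one_of_directSum_subfamily_apply_eq_one [Finite G] (hG : IsPGroup p G)
    (hCfull : ∀ c ∈ center G, c ^ p = 1 → c ∈ C) (hχ : ∀ i (c : C), ρ i c = (χ i c : ℂ) • 1)
    (hfaithful : ∀ g : G, (∀ i, ρ i g = 1) → g = 1) (P : ι → Prop)
    (hP : ∀ c : C, (∀ i, P i → χ i c = 1) → ∀ i, χ i c = 1) (g : G)
    (hg : Representation.directSum (fun i : {i // P i} => ρ i) g = 1) : g = 1 := by
  set σ := Representation.directSum fun i : {i // P i} => ρ i
  suffices hker : σ.ker = ⊥ from mem_bot.mp (hker ▸ hg)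
  by_contra hne
  obtain ⟨c, ⟨hcσ, hcZ⟩, hcp⟩ := hG.exists_mem_inf_center_orderOf_eq hne
  have hcC : c ∈ C := hCfull c hcZ (hcp ▸ pow_orderOf_eq_one c)
  have hχc : ∀ i, χ i ⟨c, hcC⟩ = 1 := hP _ fun i hi =>
    (apply_eq_one_iff_of_eq_smul_one hχ i _).mp
      ((Representation.directSum_apply_eq_one_iff _ c).mp hcσ ⟨i, hi⟩)
  have hc : c = 1 := hfaithful c fun i => (apply_eq_one_iff_of_eq_smul_one hχ i _).mpr (hχc i)
  exact (Fact.out : p.Prime).one_lt.ne' (hcp ▸ hc ▸ orderOf_one)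

theorem eq_zero_of_prod_pow_eq_one_of_minimal [Finite G] [Fintype ι]
    [∀ i, FiniteDimensional ℂ (V i)] (hG : IsPGroup p G)
    (hCfull : ∀ c ∈ center G, c ^ p = 1 → c ∈ C) (hχ : ∀ i (c : C), ρ i c = (χ i c : ℂ) • 1)
    (hfaithful : ∀ g : G, (∀ i, ρ i g = 1) → g = 1)
    (hmin : ∀ (W : Type u) [AddCommGroup W] [Module ℂ W] [FiniteDimensional ℂ W]
      (σ : Representation ℂ G W), (∀ g : G, σ g = 1 → g = 1) →
      (∑ i, Module.finrank ℂ (V i)) ≤ Module.finrank ℂ W)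
    (hχp : ∀ i, χ i ^ p = 1) (a : ι → ZMod p) (ha : ∏ i, χ i ^ (a i).val = 1) : a = 0 := by
  classical
  by_contra hne
  obtain ⟨j, hj⟩ := Function.ne_iff.mp hne
  have hP : ∀ c : C, (∀ i, i ≠ j → χ i c = 1) → ∀ i, χ i c = 1 := by
    intro c hc
    have hcj : χ j c ^ (a j).val = 1 := by
      have := congrArg (· c) ha
      simp only [MonoidHom.finsetProd_apply, MonoidHom.pow_apply, MonoidHom.one_apply] at this
      rwa [Finset.prod_eq_single j (fun i _ hij => by rw [hc i hij, one_pow]) (by simp)] at this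
    have hχjp : χ j c ^ p = 1 := by rw [← MonoidHom.pow_apply, hχp j, MonoidHom.one_apply]
    intro i
    obtain rfl | hij := eq_or_ne i j
    · exact (pow_val_eq_one_iff hχjp hj).mp hcj
    · exact hc i hij
  have hle :=
    hmin _ _ (eq_one_of_directSum_subfamily_apply_eq_one hG hCfull hχ hfaithful (· ≠ j) hP)
  rw [Module.finrank_directSum,
    Fintype.sum_eq_add_sum_subtype_ne (fun i => Module.finrank ℂ (V i)) j] at hle
  have := Module.finrank_pos (R := ℂ) (M := V j)
  omega

end MinimalFaithful

/-- Let `G` be a finite p-group, `C` the p-torsion subgroup of its center,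
and `ρ = ρ₁ ⊕ ⋯ ⊕ ρ_m` a faithful complex representation of minimal
dimension among faithful representations of `G`, with each `ρ_i`
irreducible acting on `C` by the scalar character `χ_i`.  Then the `χ_i`
form a basis of the elementary abelian p-group (`𝔽_p`-vector space)
`C* = Hom(C, μ_p)`: they generate it and are `𝔽_p`-independent; in
particular `m = dim_{𝔽_p} C`, i.e. `|C| = p^m`. -/
theorem stmt5 {p : ℕ} (hp : p.Prime) {G : Type*} [Group G] [Finite G]
    (hG : IsPGroup p G)
    (C : Subgroup G) (hC : C ≤ Subgroup.center G)
    (hCp : ∀ c ∈ C, c ^ p = 1)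
    (hCfull : ∀ c ∈ Subgroup.center G, c ^ p = 1 → c ∈ C)
    (m : ℕ) (V : Fin m → Type)
    [∀ i, AddCommGroup (V i)] [∀ i, Module ℂ (V i)]
    [∀ i, FiniteDimensional ℂ (V i)]
    (ρ : ∀ i, Representation ℂ G (V i))
    (hirr : ∀ i, IsSimpleModule (MonoidAlgebra ℂ G) (ρ i).asModule)
    (χ : Fin m → (C →* ℂˣ))
    (hχ : ∀ i (c : C), ρ i (c : G) = (χ i c : ℂ) • (1 : Module.End ℂ (V i)))
    (hfaithful : ∀ g : G, (∀ i, ρ i g = 1) → g = 1)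
    (hmin : ∀ (W : Type) [AddCommGroup W] [Module ℂ W] [FiniteDimensional ℂ W]
      (σ : Representation ℂ G W), (∀ g : G, σ g = 1 → g = 1) →
      (∑ i, Module.finrank ℂ (V i)) ≤ Module.finrank ℂ W) :
    Subgroup.closure (Set.range χ) = (⊤ : Subgroup (C →* ℂˣ)) ∧
      (∀ a : Fin m → ZMod p, (∏ i, χ i ^ (a i).val) = 1 → a = 0) ∧
      Nat.card C = p ^ m := by
  have : Fact p.Prime := ⟨hp⟩
  have : ∀ i, Nontrivial (V i) := fun i =>
    IsSimpleModule.nontrivial (MonoidAlgebra ℂ G) (ρ i).asModule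
  have : IsMulCommutative C :=
    le_centralizer_iff_isMulCommutative.mp (hC.trans (center_le_centralizer _))
  have hχp : ∀ i, χ i ^ p = 1 := fun i => MonoidHom.ext fun c => by
    rw [MonoidHom.pow_apply, ← map_pow, show c ^ p = 1 from Subtype.ext (hCp c c.2), map_one,
      MonoidHom.one_apply]
  have hsep : ∀ c : C, (∀ i, χ i c = 1) → c = 1 := fun c hc =>
    Subtype.ext (hfaithful c fun i => (apply_eq_one_iff_of_eq_smul_one hχ i c).mpr (hc i))
  have hind := eq_zero_of_prod_pow_eq_one_of_minimal hG hCfull hχ hfaithful hmin hχp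
  obtain ⟨htop, hcard⟩ := closure_eq_top_and_card_eq_of_separating_of_independent χ hχp hsep hind
  exact ⟨htop, hind, by simpa using hcard⟩
end

section
/- Let G be a finite p-group such that the commutator subgroup [G,G] is contained in the center Z(G) and is cyclic. Then the commutator map induces a nondegenerate alternating bilinear form on Q = G/Z(G); in particular, the order of G/Z(G) is a perfect square. -/
/-!
Since commutators are central, `⁅·, ·⁆` is multiplicative in each variable, so it is an
alternating pairing `G →* G →* [G, G]` whose radical is `Z(G)`.

For an alternating pairing `β` with values in a finite cyclic `p`-group, pick `x, y` such that
`β x y` has maximal order `m`. In a cyclic `p`-group every value of `β` then lies in `⟨β x y⟩`,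
so `w ↦ (β x w, β y w)` maps `⟨x, y⟩` onto `⟨β x y⟩²` and its kernel `K` has index `m²`.
Every element is a product of an element of `K` and one of `⟨x, y⟩`, which is orthogonal to `K`;
hence the radical of `β` restricted to `K` is the radical of `β`, and induction on `|G|` shows
that the radical has square index.
-/

open scoped commutatorElement

open Subgroup

theorem IsCyclic.mem_zpowers_of_orderOf_dvd {C : Type*} [Group C] [IsCyclic C] [Finite C]
    {c d : C} (h : orderOf d ∣ orderOf c) : d ∈ zpowers c := by
  classical
  have := Fintype.ofFinite C
  let S : Finset C := {a | a ^ orderOf c = 1}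
  have hsub : (zpowers c : Set C).toFinset ⊆ S := by
    intro a ha
    obtain ⟨k, rfl⟩ := mem_zpowers_iff.mp (Set.mem_toFinset.mp ha)
    simp only [S, Finset.mem_filter, Finset.mem_univ, true_and]
    rw [← zpow_natCast, ← zpow_mul, mul_comm, zpow_mul, zpow_natCast, pow_orderOf_eq_one, one_zpow]
  have hcard : S.card ≤ (zpowers c : Set C).toFinset.card := by
    have : (zpowers c : Set C).toFinset.card = orderOf c := by
      rw [Set.toFinset_card, ← Nat.card_eq_fintype_card]
      exact Nat.card_zpowers c
    exact this ▸ IsCyclic.card_pow_eq_one_le (orderOf_pos c)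
  have hd : d ∈ S := by simpa [S] using orderOf_dvd_iff_pow_eq_one.mp h
  rw [← Finset.eq_of_subset_of_card_le hsub hcard] at hd
  simpa using hd

theorem IsPGroup.orderOf_dvd_of_le {p : ℕ} [Fact p.Prime] {C : Type*} [Group C]
    (hC : IsPGroup p C) {c d : C} (h : orderOf d ≤ orderOf c) : orderOf d ∣ orderOf c := by
  obtain ⟨i, hi⟩ := IsPGroup.iff_orderOf.mp hC d
  obtain ⟨j, hj⟩ := IsPGroup.iff_orderOf.mp hC c
  rw [hi, hj] at h ⊢
  exact pow_dvd_pow p ((Nat.pow_le_pow_iff_right (Fact.out : p.Prime).one_lt).mp h)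

namespace MonoidHom

variable {G C : Type*} [Group G] [CommGroup C]

def restrict₂ (β : G →* G →* C) (K : Subgroup G) : K →* K →* C :=
  (β.comp K.subtype).compl₂ K.subtype

@[simp]
theorem restrict₂_apply (β : G →* G →* C) (K : Subgroup G) (a b : K) :
    β.restrict₂ K a b = β a b :=
  rfl

section AlternatingPairing

variable {β : G →* G →* C}

theorem mem_ker_iff_forall_eq_one {x : G} : x ∈ β.ker ↔ ∀ y, β x y = 1 := by
  simp [DFunLike.ext_iff]

variable (hβ : ∀ x, β x x = 1)
include hβ

theorem apply_swap_eq_inv (x y : G) : β y x = (β x y)⁻¹ := by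
  have := hβ (x * y)
  simp only [map_mul, mul_apply, hβ, one_mul, mul_one] at this
  exact eq_inv_of_mul_eq_one_left this

theorem ker_le_ker_prod (x y : G) : β.ker ≤ ((β x).prod (β y)).ker := by
  intro z hz
  rw [mem_ker_iff_forall_eq_one] at hz
  simp [apply_swap_eq_inv hβ z, hz]

variable {x y : G} (hval : ∀ z w, β z w ∈ zpowers (β x y))
include hval

theorem map_closure_pair_eq_prod :
    (closure {x, y}).map ((β x).prod (β y)) = (zpowers (β x y)).prod (zpowers (β x y)) := by
  refine le_antisymm (map_le_iff_le_comap.mpr fun w _ ↦ ⟨hval x w, hval y w⟩) ?_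
  rintro ⟨_, _⟩ ⟨⟨a, rfl⟩, ⟨b, rfl⟩⟩
  refine ⟨y ^ a * x ^ (-b), mul_mem (zpow_mem (subset_closure (by simp)) a)
    (zpow_mem (subset_closure (by simp)) (-b)), ?_⟩
  simp [hβ, apply_swap_eq_inv hβ x y]

theorem index_ker_prod : ((β x).prod (β y)).ker.index = orderOf (β x y) ^ 2 := by
  have hrange : ((β x).prod (β y)).range = (zpowers (β x y)).prod (zpowers (β x y)) :=
    le_antisymm (fun _ ⟨w, hw⟩ ↦ hw ▸ ⟨hval x w, hval y w⟩)
      (map_closure_pair_eq_prod hβ hval ▸ map_le_range _ _)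
  rw [index_ker, hrange, Nat.card_congr (prodEquiv _ _).toEquiv, Nat.card_prod, Nat.card_zpowers,
    sq]

theorem exists_mem_ker_prod_mul_mem_closure (w : G) :
    ∃ k ∈ ((β x).prod (β y)).ker, ∃ t ∈ closure {x, y}, w = k * t := by
  obtain ⟨t, ht, hwt⟩ : ((β x).prod (β y)) w ∈ (closure {x, y}).map ((β x).prod (β y)) := by
    rw [map_closure_pair_eq_prod hβ hval]
    exact ⟨hval x w, hval y w⟩
  exact ⟨w * t⁻¹, by rw [mem_ker, map_mul, map_inv, hwt, mul_inv_cancel], t, ht, by group⟩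

theorem ker_restrict₂_ker_prod :
    (β.restrict₂ ((β x).prod (β y)).ker).ker = β.ker.subgroupOf ((β x).prod (β y)).ker := by
  ext ⟨z, hz⟩
  simp only [mem_subgroupOf, mem_ker_iff_forall_eq_one, restrict₂_apply, Subtype.forall]
  refine ⟨fun h w ↦ ?_, fun h k _ ↦ h k⟩
  obtain ⟨k, hk, t, ht, rfl⟩ := exists_mem_ker_prod_mul_mem_closure hβ hval w
  have hxy : closure {x, y} ≤ (β z).ker := by
    rw [mem_ker, prod_apply, Prod.mk_eq_one] at hz
    simp [closure_le, Set.insert_subset_iff, apply_swap_eq_inv hβ _ z, hz]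
  rw [map_mul, h k hk, hxy ht, mul_one]

end AlternatingPairing

theorem isSquare_index_ker_of_alternating {p : ℕ} [Fact p.Prime] [Finite G] [IsCyclic C]
    [Finite C] (hC : IsPGroup p C) (β : G →* G →* C) (hβ : ∀ x, β x x = 1) :
    IsSquare β.ker.index := by
  induction hn : Nat.card G using Nat.strong_induction_on generalizing G with
  | _ n ih =>
  obtain ⟨⟨x, y⟩, hmax⟩ := Finite.exists_max fun v : G × G ↦ orderOf (β v.1 v.2)
  have hval (z w : G) : β z w ∈ zpowers (β x y) :=
    IsCyclic.mem_zpowers_of_orderOf_dvd (hC.orderOf_dvd_of_le (hmax (z, w)))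
  by_cases hm : orderOf (β x y) = 1
  · have hker : β.ker = ⊤ := by
      rw [orderOf_eq_one_iff] at hm
      refine eq_top_iff.mpr fun z _ ↦ mem_ker_iff_forall_eq_one.mpr ?_
      simpa [hm] using hval z
    rw [hker, index_top]
    exact ⟨1, rfl⟩
  set K := ((β x).prod (β y)).ker
  have hK : K.index = orderOf (β x y) ^ 2 := index_ker_prod hβ hval
  have hlt : Nat.card K < n := by
    have : 1 < K.index := hK ▸ Nat.one_lt_pow two_ne_zero
      (lt_of_le_of_ne (orderOf_pos _) (Ne.symm hm))
    rw [← hn, ← K.card_mul_index]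
    exact lt_mul_of_one_lt_right Nat.card_pos this
  obtain ⟨r, hr⟩ := ih _ hlt (β.restrict₂ K) (fun z ↦ hβ z) rfl
  rw [← relIndex_mul_index (ker_le_ker_prod hβ x y), relIndex, ← ker_restrict₂_ker_prod hβ hval,
    hr, hK]
  exact ⟨r * orderOf (β x y), by ring⟩

end MonoidHom

section CentralCommutators

variable {G : Type*} [Group G]

theorem commutatorElement_mem_commutator (a b : G) : ⁅a, b⁆ ∈ commutator G :=
  commutator_mem_commutator (mem_top a) (mem_top b)

theorem commutatorElement_mul_mul_of_mem_center {z₁ z₂ : G} (hz₁ : z₁ ∈ center G)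
    (hz₂ : z₂ ∈ center G) (g₁ g₂ : G) : ⁅g₁ * z₁, g₂ * z₂⁆ = ⁅g₁, g₂⁆ := by
  have h₁ (g : G) : ⁅z₁, g⁆ = 1 :=
    commutatorElement_eq_one_iff_mul_comm.mpr (mem_center_iff.mp hz₁ g).symm
  have h₂ (g : G) : ⁅g, z₂⁆ = 1 :=
    commutatorElement_eq_one_iff_mul_comm.mpr (mem_center_iff.mp hz₂ g)
  rw [commutatorElement_mul_left_eq_conj_mul, h₁, mul_one, mul_inv_cancel, one_mul,
    commutatorElement_mul_right_eq_mul_conj, h₂, mul_one, mul_inv_cancel_right]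

variable (hG : commutator G ≤ center G)
include hG

theorem commutatorElement_mul_left_of_le_center (a b c : G) : ⁅a * b, c⁆ = ⁅a, c⁆ * ⁅b, c⁆ := by
  have hbc := mem_center_iff.mp (hG (commutatorElement_mem_commutator b c))
  rw [commutatorElement_mul_left_eq_conj_mul, hbc, mul_inv_cancel_right, hbc]

theorem commutatorElement_mul_right_of_le_center (a b c : G) : ⁅a, b * c⁆ = ⁅a, b⁆ * ⁅a, c⁆ := by
  have hac := mem_center_iff.mp (hG (commutatorElement_mem_commutator a c))
  rw [commutatorElement_mul_right_eq_mul_conj, mul_assoc _ b, hac, ← mul_assoc,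
    mul_inv_cancel_right]

open scoped IsMulCommutative

variable [IsMulCommutative (commutator G)]

def commutatorPairing : G →* G →* commutator G :=
  MonoidHom.mk' (fun a ↦ MonoidHom.mk' (fun b ↦ ⟨⁅a, b⁆, commutatorElement_mem_commutator a b⟩)
      fun b c ↦ Subtype.ext (commutatorElement_mul_right_of_le_center hG a b c))
    fun a b ↦ MonoidHom.ext fun c ↦ Subtype.ext (commutatorElement_mul_left_of_le_center hG a b c)

@[simp]
theorem coe_commutatorPairing_apply (a b : G) : (commutatorPairing hG a b : G) = ⁅a, b⁆ :=
  rfl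

theorem ker_commutatorPairing : (commutatorPairing hG).ker = center G := by
  ext g
  rw [MonoidHom.mem_ker_iff_forall_eq_one, mem_center_iff]
  refine forall_congr' fun h ↦ ?_
  rw [Subtype.ext_iff, coe_commutatorPairing_apply, OneMemClass.coe_one,
    commutatorElement_eq_one_iff_mul_comm, eq_comm]

end CentralCommutators

/-- Let `G` be a finite p-group with `[G,G]` central and cyclic.  Then the
commutator map induces a well-defined, alternating, bilinear and
nondegenerate form on `Q = G/Z(G)`; in particular `|G/Z(G)|` is a perfect
square. -/
theorem stmt8 {p : ℕ} (hp : p.Prime) {G : Type*} [Group G] [Finite G]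
    (hG : IsPGroup p G) (hcentral : commutator G ≤ Subgroup.center G)
    (hcyc : IsCyclic (commutator G)) :
    -- well-defined on Q = G/Z(G):
    (∀ g₁ g₂ z₁ z₂ : G, z₁ ∈ Subgroup.center G → z₂ ∈ Subgroup.center G →
      ⁅g₁ * z₁, g₂ * z₂⁆ = ⁅g₁, g₂⁆) ∧
    -- bilinear:
    (∀ g₁ g₂ h : G, ⁅g₁ * g₂, h⁆ = ⁅g₁, h⁆ * ⁅g₂, h⁆) ∧
    (∀ g h₁ h₂ : G, ⁅g, h₁ * h₂⁆ = ⁅g, h₁⁆ * ⁅g, h₂⁆) ∧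
    -- alternating:
    (∀ g : G, ⁅g, g⁆ = 1) ∧
    -- nondegenerate:
    (∀ g : G, (∀ h : G, ⁅g, h⁆ = 1) → g ∈ Subgroup.center G) ∧
    -- the order of G/Z(G) is a perfect square:
    (∃ r : ℕ, Nat.card (G ⧸ Subgroup.center G) = r ^ 2) := by
  have := Fact.mk hp
  refine ⟨fun g₁ g₂ z₁ z₂ hz₁ hz₂ ↦ commutatorElement_mul_mul_of_mem_center hz₁ hz₂ g₁ g₂,
    commutatorElement_mul_left_of_le_center hcentral,
    commutatorElement_mul_right_of_le_center hcentral, commutatorElement_self,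
    fun g hg ↦ mem_center_iff.mpr fun h ↦ (commutatorElement_eq_one_iff_mul_comm.mp (hg h)).symm,
    ?_⟩
  open scoped IsMulCommutative in
  obtain ⟨r, hr⟩ := MonoidHom.isSquare_index_ker_of_alternating (hG.to_subgroup _)
    (commutatorPairing hcentral) fun g ↦ Subtype.ext (commutatorElement_self g)
  rw [ker_commutatorPairing] at hr
  exact ⟨r, hr.trans (sq r).symm⟩
end

section
/- Let Q be a finite abelian group of order p^m equipped with an alternating bilinear form β : Q × Q → ℤ/p^e. Then Q contains an isotropic subgroup of index at most p^{⌊m/2⌋}. -/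
/-!
Take an isotropic subgroup `I` of maximal order. If `z` is orthogonal to `I`, then `I + ⟨z⟩` is
still isotropic because `β(z, z) = 0`, so `z ∈ I`: the orthogonal of `I` is contained in `I`.
That orthogonal is the kernel of `z ↦ β(·, z)|_I : Q → Hom(I, ℤ/p^e)`, and `Hom(I, ℤ/n)` has at
most `|I|` elements because it embeds into the character group of `I`. Hence `[Q : I] ≤ |I|`,
i.e. `[Q : I]^2 ≤ |Q| = p^m`, and since `[Q : I]` is a power of `p`, `[Q : I] ≤ p^⌊m/2⌋`.
-/

open AddSubgroup

lemma card_addMonoidHom_zmod_le (G : Type*) [AddCommGroup G] [Finite G] (n : ℕ) [NeZero n] :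
    Nat.card (G →+ ZMod n) ≤ Nat.card G := by
  have hinj : Function.Injective fun f : G →+ ZMod n ↦ ZMod.stdAddChar.compAddMonoidHom f :=
    fun f g h ↦ AddMonoidHom.ext fun x ↦ ZMod.injective_stdAddChar (DFunLike.congr_fun h x)
  cases nonempty_fintype G
  calc Nat.card (G →+ ZMod n) ≤ Nat.card (AddChar G ℂ) := Nat.card_le_card_of_injective _ hinj
    _ = Nat.card G := by simp only [Nat.card_eq_fintype_card, AddChar.card_eq]

lemma le_pow_div_two_of_sq_le {p a m : ℕ} (hp : p.Prime) (ha : a ∣ p ^ m) (h : a ^ 2 ≤ p ^ m) :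
    a ≤ p ^ (m / 2) := by
  obtain ⟨i, -, rfl⟩ := (Nat.dvd_prime_pow hp).1 ha
  rw [← pow_mul, Nat.pow_le_pow_iff_right hp.one_lt] at h
  exact Nat.pow_le_pow_right hp.pos (by omega)

namespace AddMonoidHom

variable {A : Type*} [AddCommGroup A]

section AddCommGroup

variable {R : Type*} [AddCommGroup R]

def IsIsotropic (B : A →+ A →+ R) (I : AddSubgroup A) : Prop := ∀ x ∈ I, ∀ y ∈ I, B x y = 0

def orthogonal (B : A →+ A →+ R) (I : AddSubgroup A) : AddSubgroup A :=
  (B.flip.compl₂ I.subtype).ker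

variable {B : A →+ A →+ R}

lemma mem_orthogonal {I : AddSubgroup A} {z : A} :
    z ∈ B.orthogonal I ↔ ∀ x ∈ I, B x z = 0 := by
  simp [orthogonal, AddMonoidHom.ext_iff]

lemma apply_swap_eq_neg_of_alt (hB : ∀ x, B x x = 0) (x y : A) : B y x = -B x y := by
  have := hB (x + y)
  simp only [map_add, add_apply, hB, zero_add, add_zero] at this
  exact eq_neg_of_add_eq_zero_left this

lemma IsIsotropic.sup_zmultiples (hB : ∀ x, B x x = 0) {I : AddSubgroup A} (hI : B.IsIsotropic I)
    {z : A} (hz : z ∈ B.orthogonal I) : B.IsIsotropic (I ⊔ zmultiples z) := by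
  rw [mem_orthogonal] at hz
  rintro _ hu _ hw
  obtain ⟨a, ha, _, ⟨i, rfl⟩, rfl⟩ := mem_sup.1 hu
  obtain ⟨b, hb, _, ⟨j, rfl⟩, rfl⟩ := mem_sup.1 hw
  simp [hI a ha b hb, hz a ha, apply_swap_eq_neg_of_alt hB b z, hz b hb, hB]

lemma exists_isIsotropic_orthogonal_le [Finite A] (hB : ∀ x, B x x = 0) :
    ∃ I, B.IsIsotropic I ∧ B.orthogonal I ≤ I := by
  have : Nonempty {I : AddSubgroup A // B.IsIsotropic I} := ⟨⊥, by simp [IsIsotropic]⟩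
  obtain ⟨⟨I, hI⟩, hmax⟩ :=
    Finite.exists_max fun I : {I : AddSubgroup A // B.IsIsotropic I} ↦ Nat.card I.1
  refine ⟨I, hI, fun z hz ↦ ?_⟩
  have hJ := hI.sup_zmultiples hB hz
  have : I ⊔ zmultiples z = I := (eq_of_le_of_card_ge le_sup_left (hmax ⟨_, hJ⟩)).symm
  exact this ▸ mem_sup_right (mem_zmultiples z)

end AddCommGroup

variable {n : ℕ} [NeZero n]

lemma index_orthogonal_le (B : A →+ A →+ ZMod n) (I : AddSubgroup A) [Finite I] :
    (B.orthogonal I).index ≤ Nat.card I := by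
  have : Finite (I →+ ZMod n) := .of_injective _ DFunLike.coe_injective
  rw [orthogonal, index_ker]
  exact (Finite.card_subtype_le _).trans (card_addMonoidHom_zmod_le I n)

theorem exists_isIsotropic_index_sq_le [Finite A] {B : A →+ A →+ ZMod n}
    (hB : ∀ x, B x x = 0) : ∃ I, B.IsIsotropic I ∧ I.index ^ 2 ≤ Nat.card A := by
  obtain ⟨I, hI, hle⟩ := exists_isIsotropic_orthogonal_le hB
  refine ⟨I, hI, ?_⟩
  calc I.index ^ 2 ≤ I.index * Nat.card I :=
        sq I.index ▸ Nat.mul_le_mul_left _ ((index_antitone hle).trans (index_orthogonal_le B I))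
    _ = Nat.card A := by rw [mul_comm, card_mul_index]

end AddMonoidHom

/-- A finite abelian group `Q` of order `p^m` with an alternating biadditive
form `β : Q × Q → ℤ/p^e` contains an isotropic subgroup of index at most
`p^⌊m/2⌋`. -/
theorem stmt10 {p : ℕ} (hp : p.Prime) {Q : Type*} [CommGroup Q] [Finite Q]
    (m e : ℕ) (hQ : Nat.card Q = p ^ m)
    (β : Q → Q → ZMod (p ^ e))
    (hbiadd_left : ∀ x y z : Q, β (x * y) z = β x z + β y z)
    (hbiadd_right : ∀ x y z : Q, β x (y * z) = β x y + β x z)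
    (halt : ∀ x : Q, β x x = 0) :
    ∃ I : Subgroup Q, (∀ x ∈ I, ∀ y ∈ I, β x y = 0) ∧ I.index ≤ p ^ (m / 2) := by
  have : NeZero (p ^ e) := ⟨pow_ne_zero e hp.ne_zero⟩
  let B : Additive Q →+ Additive Q →+ ZMod (p ^ e) :=
    AddMonoidHom.mk' (fun x ↦ AddMonoidHom.mk' (fun y ↦ β x.toMul y.toMul) (hbiadd_right x))
      fun x y ↦ AddMonoidHom.ext (hbiadd_left x y)
  obtain ⟨I, hI, hindex⟩ := AddMonoidHom.exists_isIsotropic_index_sq_le (B := B) halt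
  refine ⟨AddSubgroup.toSubgroup' I, hI, ?_⟩
  have hcard : Nat.card (Additive Q) = p ^ m := hQ
  exact le_pow_div_two_of_sq_le hp (hcard ▸ I.index_dvd_card) (hcard ▸ hindex)
end
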